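/- arXiv:math/9806140 — 2 statements merged into one kernel-verified Lean document; each statement's English description precedes it below -/
import Mathlib

section
/- Assume 2h is not a nonpositive integer. Then the q_R-conformal symmetries satisfy [l_i, L_n] = (i−n)·L_{i+n} for all i ∈ {−1, 0, 1} and all n ∈ ℤ. -/
open Polynomial

noncomputable section

/-- Multiplication by `X` (the operator `l₋₁`). -/
def mulX : Module.End ℂ (Polynomial ℂ) := LinearMap.mulLeft ℂ (X : Polynomial ℂ)

/-- The differentiation operator `d/dz` (the operator `D`). -/
def der : Module.End ℂ (Polynomial ℂ) := Polynomial.derivative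

/-- The generators `l₋₁, l₀, l₁` of `sl(2,ℂ)` acting on the Verma module `V_h ≅ ℂ[z]`. -/
def lgen (h : ℝ) (i : ℤ) : Module.End ℂ (Polynomial ℂ) :=
  if i = -1 then mulX
  else if i = 0 then mulX * der + (h : ℂ) • 1
  else if i = 1 then mulX * der * der + ((2 * h : ℝ) : ℂ) • der
  else 0

/-- The operator `F`, `F zⁿ = zⁿ⁺¹/(n+2h)`. -/
def Fop (h : ℝ) : Module.End ℂ (Polynomial ℂ) :=
  (Polynomial.basisMonomials ℂ).constr ℂ fun n =>
    (((n : ℂ) + 2 * (h : ℂ))⁻¹) • (X : Polynomial ℂ) ^ (n + 1)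

/-- The `q_R`-conformal symmetries `L_k` (`k ∈ ℤ`) acting on `ℂ[z]`. -/
def Lop (h : ℝ) (k : ℤ) : Module.End ℂ (Polynomial ℂ) :=
  (Polynomial.basisMonomials ℂ).constr ℂ fun n =>
    if 0 ≤ k then
      ((((n : ℂ) - (k : ℂ)) + ((k : ℂ) + 1) * (h : ℂ)) * (n.descFactorial k.toNat : ℂ)) •
        (X : Polynomial ℂ) ^ (n - k.toNat)
    else
      (((n : ℂ) + (((-k).toNat : ℂ) + 1) * (h : ℂ)) /
          ∏ j ∈ Finset.range (-k).toNat, ((n : ℂ) + 2 * (h : ℂ) + (j : ℂ))) •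
        (X : Polynomial ℂ) ^ (n + (-k).toNat)

/-- The deviations `A_{n,m} = [L_n, L_m] − (n−m)·L_{n+m}`. -/
def dev (h : ℝ) (n m : ℤ) : Module.End ℂ (Polynomial ℂ) :=
  Lop h n * Lop h m - Lop h m * Lop h n - ((n - m : ℤ) : ℂ) • Lop h (n + m)

/-- The diagonal eigenvalue `a_k(j)` of the deviation `A_{k,−k}` on the monomial `z^j`. -/
def adiag (h : ℝ) (k : ℤ) (j : ℕ) : ℂ := ((dev h k (-k)) ((X : Polynomial ℂ) ^ j)).coeff j

/-- The weight `⟨zⁿ, zⁿ⟩ = n!·(2h)(2h+1)⋯(2h+n−1)`. -/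
def wgt (h : ℝ) (n : ℕ) : ℝ := (n.factorial : ℝ) * ∏ j ∈ Finset.range n, (2 * h + (j : ℝ))

/-- The inner product of the unitarizable Verma module (`h > 0`), conjugate-linear in
the first argument. -/
def ip (h : ℝ) (p q : Polynomial ℂ) : ℂ :=
  ∑ n ∈ p.support, (starRingEnd ℂ) (p.coeff n) * q.coeff n * ((wgt h n : ℝ) : ℂ)

/-- The associated norm. -/
def nrm (h : ℝ) (p : Polynomial ℂ) : ℝ := Real.sqrt (ip h p p).re

/-- The fundamental form `α_{i,j} = ((6h²−6h+1)/6)·(j³−j)·δ_{i+j,0}`. -/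
def alphaF (h : ℝ) (i j : ℤ) : ℝ :=
  if i + j = 0 then ((6 * h ^ 2 - 6 * h + 1) / 6) * ((j : ℝ) ^ 3 - (j : ℝ)) else 0

/-- The inverse fundamental form `α^{k,−k} = −1/α_{k,−k}` (for `|k| ≥ 2`). -/
def alphaInv (h : ℝ) (k : ℤ) : ℝ := -1 / alphaF h k (-k)


lemma basis_eq (n : ℕ) : (Polynomial.basisMonomials ℂ) n = (X:ℂ[X])^n := by
  simp [Polynomial.coe_basisMonomials, X_pow_eq_monomial]

def Pp (h : ℝ) (m k : ℕ) : ℂ := ∏ j ∈ Finset.range k, ((m:ℂ) + 2*(h:ℂ) + (j:ℂ))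

lemma Lop_nat (h : ℝ) (k m : ℕ) :
    Lop h (k:ℤ) ((X:ℂ[X])^m) =
      ((((m:ℂ) - (k:ℂ)) + ((k:ℂ)+1)*(h:ℂ)) * (m.descFactorial k : ℂ)) • (X:ℂ[X])^(m-k) := by
  rw [← basis_eq m, Lop, Module.Basis.constr_basis]
  simp [basis_eq]

lemma negSucc_toNat (K : ℕ) : (-Int.negSucc K).toNat = K+1 := by
  simp [Int.negSucc_eq]

lemma Lop_neg (h : ℝ) (K m : ℕ) :
    Lop h (Int.negSucc K) ((X:ℂ[X])^m) =
      ((((m:ℂ) + (((K:ℂ)+1)+1)*(h:ℂ))) / Pp h m (K+1)) • (X:ℂ[X])^(m+(K+1)) := by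
  rw [← basis_eq m, Lop, Module.Basis.constr_basis]
  simp [basis_eq, Pp, negSucc_toNat]

lemma lgen_m1 (h : ℝ) (p : ℂ[X]) : lgen h (-1) p = X * p := by
  simp [lgen, mulX]

lemma lgen_0 (h : ℝ) (m : ℕ) : lgen h 0 ((X:ℂ[X])^m) = ((m:ℂ)+(h:ℂ)) • (X:ℂ[X])^m := by
  have : lgen h 0 = mulX * der + (h:ℂ) • 1 := by simp [lgen]
  rw [this]
  cases m with
  | zero => simp [mulX, der]
  | succ s =>
    simp [mulX, der, derivative_X_pow, smul_eq_C_mul]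
    ring

lemma lgen_1 (h : ℝ) (m : ℕ) :
    lgen h 1 ((X:ℂ[X])^m) = ((m:ℂ)*((m:ℂ)-1+2*(h:ℂ))) • (X:ℂ[X])^(m-1) := by
  have : lgen h 1 = mulX * der * der + ((2 * h : ℝ) : ℂ) • der := by simp [lgen]
  rw [this]
  match m with
  | 0 => simp [mulX, der]
  | 1 => simp [mulX, der, smul_eq_C_mul, Complex.ofReal_mul, C_mul]
  | (s+2) =>
    simp [mulX, der, derivative_X_pow, smul_eq_C_mul, C_eq_natCast, Complex.ofReal_mul, C_mul,
      map_ofNat]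
    push_cast
    ring

lemma factor_ne (h : ℝ) (hnd : ∀ n : ℕ, 2 * h ≠ -(n : ℝ)) (m j : ℕ) :
    ((m:ℂ) + 2*(h:ℂ) + (j:ℂ)) ≠ 0 := by
  have : ((m:ℂ) + 2*(h:ℂ) + (j:ℂ)) = (((m:ℝ) + 2*h + (j:ℝ) : ℝ) : ℂ) := by push_cast; ring
  rw [this, Complex.ofReal_ne_zero]
  intro hc
  exact hnd (m + j) (by push_cast; linarith)

lemma Pp_ne (h : ℝ) (hnd : ∀ n : ℕ, 2 * h ≠ -(n : ℝ)) (m k : ℕ) : Pp h m k ≠ 0 :=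
  Finset.prod_ne_zero_iff.2 fun j _ => factor_ne h hnd m j

lemma Pp_succ (h : ℝ) (m k : ℕ) : Pp h m (k+1) = Pp h m k * ((m:ℂ) + 2*(h:ℂ) + (k:ℂ)) := by
  rw [Pp, Finset.prod_range_succ]; rfl

lemma Pp_shift (h : ℝ) (m k : ℕ) :
    Pp h m (k+1) = ((m:ℂ) + 2*(h:ℂ)) * Pp h (m+1) k := by
  rw [Pp, Finset.prod_range_succ', mul_comm]
  congr 1
  · push_cast; ring
  · rw [Pp]
    apply Finset.prod_congr rfl
    intro j _
    push_cast; ring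

lemma df_succ (n k : ℕ) : ((n.descFactorial (k+1) : ℂ)) = ((n:ℂ)-(k:ℂ)) * n.descFactorial k := by
  rcases lt_or_ge n k with hlt | hge
  · rw [Nat.descFactorial_eq_zero_iff_lt.2 hlt,
      Nat.descFactorial_eq_zero_iff_lt.2 (hlt.trans k.lt_succ_self)]
    simp
  · rw [Nat.descFactorial_succ, Nat.cast_mul, Nat.cast_sub hge]

lemma df_succ_succ (n k : ℕ) :
    (((n+1).descFactorial (k+1) : ℂ)) = ((n:ℂ)+1) * n.descFactorial k := by
  rw [Nat.succ_descFactorial_succ]; push_cast; ring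

lemma Mz (h : ℝ) (hnd : ∀ n : ℕ, 2 * h ≠ -(n : ℝ)) :
    lgen h (-1) * Lop h ((0:ℕ):ℤ) - Lop h ((0:ℕ):ℤ) * lgen h (-1)
      = (((-1:ℤ) - ((0:ℕ):ℤ) : ℤ) : ℂ) • Lop h (-1 + ((0:ℕ):ℤ)) := by
  have e : (-1 + ((0:ℕ):ℤ) : ℤ) = Int.negSucc 0 := by decide
  rw [e]
  refine Module.Basis.ext (Polynomial.basisMonomials ℂ) fun m => ?_
  rw [basis_eq]
  simp only [LinearMap.sub_apply, Module.End.mul_apply, LinearMap.smul_apply]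
  rw [lgen_m1, lgen_m1, Lop_nat, mul_smul_comm, ← pow_succ', ← pow_succ', Lop_nat,
    Lop_neg, smul_smul]
  rw [Nat.sub_zero, Nat.sub_zero]
  rw [← sub_smul]
  congr 1
  have h1 : ((m:ℂ) + 2*(h:ℂ)) ≠ 0 := by simpa using factor_ne h hnd m 0
  simp only [Pp, Finset.prod_range_one, Nat.cast_zero, add_zero]
  norm_num [Finset.prod_range_one]
  field_simp

lemma Mp (h : ℝ) (K : ℕ) :
    lgen h (-1) * Lop h ((K+1:ℕ):ℤ) - Lop h ((K+1:ℕ):ℤ) * lgen h (-1)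
      = (((-1:ℤ) - ((K+1:ℕ):ℤ) : ℤ) : ℂ) • Lop h (-1 + ((K+1:ℕ):ℤ)) := by
  have e : (-1 + ((K+1:ℕ):ℤ) : ℤ) = ((K:ℕ):ℤ) := by push_cast; ring
  rw [e]
  refine Module.Basis.ext (Polynomial.basisMonomials ℂ) fun m => ?_
  rw [basis_eq]
  simp only [LinearMap.sub_apply, Module.End.mul_apply, LinearMap.smul_apply]
  rw [lgen_m1, lgen_m1, Lop_nat, mul_smul_comm, ← pow_succ', ← pow_succ', Lop_nat,
    Lop_nat, smul_smul]
  rcases Nat.lt_or_ge m K with hm | hm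
  · rw [Nat.descFactorial_eq_zero_iff_lt.2 hm,
      Nat.descFactorial_eq_zero_iff_lt.2 (show m < K+1 by omega),
      Nat.descFactorial_eq_zero_iff_lt.2 (show m+1 < K+1 by omega)]
    simp
  · obtain ⟨r, rfl⟩ : ∃ r, m = K + r := ⟨m - K, by omega⟩
    rcases r with _ | s
    · -- m = K, boundary
      rw [Nat.descFactorial_eq_zero_iff_lt.2 (show K+0 < K+1 by omega)]
      rw [show K+0+1 - (K+1) = 0 from by omega, show K+0 - K = 0 from by omega]
      simp only [Nat.cast_zero, mul_zero, zero_mul, zero_smul, zero_sub]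
      rw [← neg_smul]
      congr 1
      rw [show K+0+1 = (K+0)+1 from rfl, df_succ_succ]
      push_cast
      ring
    · -- m = K + s + 1
      rw [show K+(s+1) - (K+1) + 1 = s+1 from by omega,
          show K+(s+1)+1 - (K+1) = s+1 from by omega,
          show K+(s+1) - K = s+1 from by omega]
      rw [← sub_smul]
      congr 1
      rw [show K+(s+1)+1 = (K+(s+1))+1 from rfl, df_succ_succ, df_succ (K+(s+1)) K]
      push_cast
      ring

lemma Mn (h : ℝ) (hnd : ∀ n : ℕ, 2 * h ≠ -(n : ℝ)) (K : ℕ) :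
    lgen h (-1) * Lop h (Int.negSucc K) - Lop h (Int.negSucc K) * lgen h (-1)
      = (((-1:ℤ) - Int.negSucc K : ℤ) : ℂ) • Lop h (-1 + Int.negSucc K) := by
  have e : (-1 + Int.negSucc K : ℤ) = Int.negSucc (K+1) := by
    rw [Int.negSucc_eq, Int.negSucc_eq]; push_cast; ring
  have esc : (((-1:ℤ) - Int.negSucc K : ℤ) : ℂ) = (K:ℂ) := by
    rw [Int.negSucc_eq]; push_cast; ring
  rw [e, esc]
  refine Module.Basis.ext (Polynomial.basisMonomials ℂ) fun m => ?_
  rw [basis_eq]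
  simp only [LinearMap.sub_apply, Module.End.mul_apply, LinearMap.smul_apply]
  rw [lgen_m1, lgen_m1, Lop_neg, mul_smul_comm, ← pow_succ', ← pow_succ', Lop_neg,
    Lop_neg, smul_smul]
  rw [show m+(K+1)+1 = m+(K+2) from by omega, show m+1+(K+1) = m+(K+2) from by omega]
  rw [← sub_smul]
  congr 1
  have e2 : Pp h (m+1) (K+1) = Pp h m (K+1) * ((m:ℂ)+2*(h:ℂ)+((K+1:ℕ):ℂ)) / ((m:ℂ)+2*(h:ℂ)) := by
    rw [eq_div_iff (by simpa using factor_ne h hnd m 0), mul_comm (Pp h (m+1) (K+1)), ← Pp_shift,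
      Pp_succ]
  rw [e2, Pp_succ h m (K+1)]
  have h1 : ((m:ℂ) + 2*(h:ℂ)) ≠ 0 := by simpa using factor_ne h hnd m 0
  have h2 : Pp h m (K+1) ≠ 0 := Pp_ne h hnd m (K+1)
  have h3 : ((m:ℂ) + 2*(h:ℂ) + ((K:ℂ)+1)) ≠ 0 := by
    have := factor_ne h hnd m (K+1); push_cast at this; exact this
  push_cast
  rw [div_div_eq_mul_div, div_sub_div _ _ h2 (mul_ne_zero h2 h3), mul_div_assoc', div_eq_div_iff (mul_ne_zero h2 (mul_ne_zero h2 h3)) (mul_ne_zero h2 h3)]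
  ring

lemma Zp (h : ℝ) (K : ℕ) :
    lgen h 0 * Lop h ((K:ℕ):ℤ) - Lop h ((K:ℕ):ℤ) * lgen h 0
      = (((0:ℤ) - ((K:ℕ):ℤ) : ℤ) : ℂ) • Lop h (0 + ((K:ℕ):ℤ)) := by
  have e : ((0:ℤ) + ((K:ℕ):ℤ) : ℤ) = ((K:ℕ):ℤ) := by ring
  rw [e]
  refine Module.Basis.ext (Polynomial.basisMonomials ℂ) fun m => ?_
  rw [basis_eq]
  simp only [LinearMap.sub_apply, Module.End.mul_apply, LinearMap.smul_apply]
  rw [Lop_nat, map_smul, lgen_0, lgen_0, map_smul, Lop_nat, smul_smul, smul_smul, smul_smul]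
  rcases Nat.lt_or_ge m K with hm | hm
  · rw [Nat.descFactorial_eq_zero_iff_lt.2 hm]
    simp
  · obtain ⟨r, rfl⟩ : ∃ r, m = K + r := ⟨m - K, by omega⟩
    rw [show K+r-K = r from by omega]
    rw [← sub_smul]
    congr 1
    push_cast
    ring

lemma Zn (h : ℝ) (K : ℕ) :
    lgen h 0 * Lop h (Int.negSucc K) - Lop h (Int.negSucc K) * lgen h 0
      = (((0:ℤ) - Int.negSucc K : ℤ) : ℂ) • Lop h (0 + Int.negSucc K) := by
  have e : ((0:ℤ) + Int.negSucc K : ℤ) = Int.negSucc K := by ring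
  have esc : (((0:ℤ) - Int.negSucc K : ℤ) : ℂ) = (K:ℂ)+1 := by
    rw [Int.negSucc_eq]; push_cast; ring
  rw [e, esc]
  refine Module.Basis.ext (Polynomial.basisMonomials ℂ) fun m => ?_
  rw [basis_eq]
  simp only [LinearMap.sub_apply, Module.End.mul_apply, LinearMap.smul_apply]
  rw [Lop_neg, map_smul, lgen_0, lgen_0, map_smul, Lop_neg, smul_smul, smul_smul, smul_smul]
  rw [← sub_smul]
  congr 1
  push_cast
  ring

lemma Sp (h : ℝ) (K : ℕ) :
    lgen h 1 * Lop h ((K:ℕ):ℤ) - Lop h ((K:ℕ):ℤ) * lgen h 1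
      = (((1:ℤ) - ((K:ℕ):ℤ) : ℤ) : ℂ) • Lop h (1 + ((K:ℕ):ℤ)) := by
  have e : ((1:ℤ) + ((K:ℕ):ℤ) : ℤ) = ((K+1:ℕ):ℤ) := by push_cast; ring
  rw [e]
  refine Module.Basis.ext (Polynomial.basisMonomials ℂ) fun m => ?_
  rw [basis_eq]
  simp only [LinearMap.sub_apply, Module.End.mul_apply, LinearMap.smul_apply]
  rw [Lop_nat, map_smul, lgen_1, lgen_1, map_smul, Lop_nat, Lop_nat, smul_smul, smul_smul,
    smul_smul]
  rcases Nat.lt_or_ge m K with hm | hm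
  · rw [Nat.descFactorial_eq_zero_iff_lt.2 hm,
      Nat.descFactorial_eq_zero_iff_lt.2 (show m < K+1 by omega),
      Nat.descFactorial_eq_zero_iff_lt.2 (show m-1 < K by omega)]
    simp
  · obtain ⟨r, rfl⟩ : ∃ r, m = K + r := ⟨m - K, by omega⟩
    rcases r with _ | s
    · -- m = K boundary
      rw [show K+0-K = 0 from by omega,
        Nat.descFactorial_eq_zero_iff_lt.2 (show K+0 < K+1 by omega)]
      rcases K with _ | J
      · simp
      · rw [Nat.descFactorial_eq_zero_iff_lt.2 (show J+1+0-1 < J+1 by omega)]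
        simp
    · -- m = K+s+1
      rw [show K+(s+1) = K+s+1 from by omega]
      rw [show K+s+1-K = s+1 from by omega, show K+s+1-1 = K+s from by omega,
        show K+s-K = s from by omega, show s+1-1 = s from by omega,
        show K+s+1-(K+1) = s from by omega]
      rw [← sub_smul]
      congr 1
      have hr1 : ((s:ℂ)+1) ≠ 0 := Nat.cast_add_one_ne_zero s
      have R : ((K+s+1).descFactorial K : ℂ)
          = ((K:ℂ)+(s:ℂ)+1) * ((K+s).descFactorial K : ℂ) / ((s:ℂ)+1) := by
        rw [eq_div_iff hr1]
        have h1 := df_succ (K+s+1) K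
        have h2 := df_succ_succ (K+s) K
        push_cast at h1 h2 ⊢
        linear_combination h2 - h1
      rw [df_succ_succ (K+s) K, R]
      push_cast
      field_simp
      ring

lemma divHC (a b c d P f : ℂ) (hP : P ≠ 0) (hf : f ≠ 0) (hid : a * c = d * (b * f)) :
    a/(P*f) * c = d * (b/P) := by
  field_simp
  linear_combination hid

lemma Sn0 (h : ℝ) (hnd : ∀ n : ℕ, 2 * h ≠ -(n : ℝ)) :
    lgen h 1 * Lop h (Int.negSucc 0) - Lop h (Int.negSucc 0) * lgen h 1
      = (((1:ℤ) - Int.negSucc 0 : ℤ) : ℂ) • Lop h (1 + Int.negSucc 0) := by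
  have e : ((1:ℤ) + Int.negSucc 0 : ℤ) = ((0:ℕ):ℤ) := by decide
  have esc : (((1:ℤ) - Int.negSucc 0 : ℤ) : ℂ) = (2:ℂ) := by norm_num
  rw [e, esc]
  refine Module.Basis.ext (Polynomial.basisMonomials ℂ) fun m => ?_
  rw [basis_eq]
  simp only [LinearMap.sub_apply, Module.End.mul_apply, LinearMap.smul_apply]
  rw [Lop_neg, map_smul, lgen_1, lgen_1, map_smul, Lop_nat, smul_smul, smul_smul]
  rw [show m+1-1 = m from by omega, Nat.sub_zero]
  have h1 : ((m:ℂ) + 2*(h:ℂ)) ≠ 0 := by simpa using factor_ne h hnd m 0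
  rcases m with _ | s
  · simp only [Nat.cast_zero, zero_mul, zero_smul, map_zero, sub_zero]
    congr 1
    simp only [Pp, Finset.prod_range_one]
    have h0 : (h:ℂ) ≠ 0 := by
      intro hh; apply h1; rw [hh]; ring
    push_cast at h1 ⊢
    norm_num [Finset.prod_range_one]
  · rw [show s+1-1 = s from by omega, Lop_neg, smul_smul,
      show s+(0+1) = s+1 from by omega]
    rw [← sub_smul]
    congr 1
    have h2 : ((s:ℂ) + 2*(h:ℂ)) ≠ 0 := by simpa using factor_ne h hnd s 0
    simp only [Pp, Finset.prod_range_one, Nat.cast_zero, add_zero]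
    push_cast at h1 h2 ⊢
    norm_num [Finset.prod_range_one]
    field_simp
    ring

lemma Sn (h : ℝ) (hnd : ∀ n : ℕ, 2 * h ≠ -(n : ℝ)) (K : ℕ) :
    lgen h 1 * Lop h (Int.negSucc (K+1)) - Lop h (Int.negSucc (K+1)) * lgen h 1
      = (((1:ℤ) - Int.negSucc (K+1) : ℤ) : ℂ) • Lop h (1 + Int.negSucc (K+1)) := by
  have e : ((1:ℤ) + Int.negSucc (K+1) : ℤ) = Int.negSucc K := by
    rw [Int.negSucc_eq, Int.negSucc_eq]; push_cast; ring
  have esc : (((1:ℤ) - Int.negSucc (K+1) : ℤ) : ℂ) = (K:ℂ)+3 := by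
    rw [Int.negSucc_eq]; push_cast; ring
  rw [e, esc]
  refine Module.Basis.ext (Polynomial.basisMonomials ℂ) fun m => ?_
  rw [basis_eq]
  simp only [LinearMap.sub_apply, Module.End.mul_apply, LinearMap.smul_apply]
  rw [Lop_neg, map_smul, lgen_1, lgen_1, map_smul, Lop_neg, smul_smul, smul_smul]
  rw [show m+(K+1+1)-1 = m+(K+1) from by omega, show m+(K+1) = m+K+1 from by omega]
  have h2 : Pp h m (K+1) ≠ 0 := Pp_ne h hnd m (K+1)
  have h3 : ((m:ℂ) + 2*(h:ℂ) + ((K:ℂ)+1)) ≠ 0 := by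
    have := factor_ne h hnd m (K+1); push_cast at this; exact this
  rcases m with _ | s
  · -- m = 0
    simp only [Nat.cast_zero, zero_mul, zero_smul, map_zero, sub_zero]
    rw [Lop_neg h K 0, smul_smul, show (0:ℕ)+K+1 = K+1 from by omega,
      show (0:ℕ)+(K+1) = K+1 from by omega]
    congr 1
    rw [Pp_succ h 0 (K+1)]
    exact divHC _ _ _ _ _ _ h2 (factor_ne h hnd 0 (K+1)) (by push_cast; ring)
  · rw [show s+1-1 = s from by omega, Lop_neg, smul_smul,
      show s+(K+1+1) = s+1+K+1 from by omega]
    rw [← sub_smul]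
    congr 1
    rw [Pp_succ h (s+1) (K+1), Pp_shift h s (K+1)]
    have h4 : ((s:ℂ) + 2*(h:ℂ)) ≠ 0 := by simpa using factor_ne h hnd s 0
    push_cast at h2 h3 h4 ⊢
    simp only [div_mul_eq_mul_div, mul_div_assoc']
    rw [div_sub_div _ _ (mul_ne_zero h2 h3) (mul_ne_zero h4 h2),
      div_eq_div_iff (mul_ne_zero (mul_ne_zero h2 h3) (mul_ne_zero h4 h2)) h2]
    ring

/-- `[l_i, L_n] = (i−n)·L_{i+n}` for all `i ∈ {−1,0,1}` and `n ∈ ℤ`. -/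
theorem stmt8 (h : ℝ) (hnd : ∀ n : ℕ, 2 * h ≠ -(n : ℝ)) :
    ∀ i ∈ ({-1, 0, 1} : Set ℤ), ∀ n : ℤ,
      lgen h i * Lop h n - Lop h n * lgen h i = ((i - n : ℤ) : ℂ) • Lop h (i + n) := by
  intro i hi n
  simp only [Set.mem_insert_iff, Set.mem_singleton_iff] at hi
  rcases hi with rfl | rfl | rfl
  · cases n with
    | ofNat K =>
      cases K with
      | zero => exact Mz h hnd
      | succ J => exact Mp h J
    | negSucc K => exact Mn h hnd K
  · cases n with
    | ofNat K => exact Zp h K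
    | negSucc K => exact Zn h K
  · cases n with
    | ofNat K => exact Sp h K
    | negSucc K =>
      cases K with
      | zero => exact Sn0 h hnd
      | succ J => exact Sn h hnd J
end
end

section
/- Assume 2h is not a nonpositive integer. If (L'_n)_{n∈ℤ} is a family of linear operators on ℂ[z] satisfying [l_i, L'_n] = (i−n)·L'_{i+n} for all i ∈ {−1,0,1} and n ∈ ℤ, together with the normalization L'_{−1} = l_{−1}, L'_0 = l_0, L'_1 = l_1, then L'_n = L_n for all n ∈ ℤ (the q_R-conformal symmetries are the unique such family). -/
open Polynomial

set_option maxHeartbeats 1000000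

noncomputable section

lemma bm_eq (n : ℕ) : (Polynomial.basisMonomials ℂ) n = (X : Polynomial ℂ)^n := by
  simp [Polynomial.coe_basisMonomials, Polynomial.X_pow_eq_monomial]

lemma Lop_apply_nonneg (h : ℝ) (k : ℤ) (hk : 0 ≤ k) (n : ℕ) :
    Lop h k ((X : Polynomial ℂ)^n) =
      ((((n : ℂ) - (k : ℂ)) + ((k : ℂ) + 1) * (h : ℂ)) * (n.descFactorial k.toNat : ℂ)) •
        (X : Polynomial ℂ) ^ (n - k.toNat) := by
  rw [← bm_eq n, Lop, Module.Basis.constr_basis, if_pos hk]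

lemma Lop_apply_neg (h : ℝ) (k : ℤ) (hk : ¬ 0 ≤ k) (n : ℕ) :
    Lop h k ((X : Polynomial ℂ)^n) =
      (((n : ℂ) + (((-k).toNat : ℂ) + 1) * (h : ℂ)) /
          ∏ j ∈ Finset.range (-k).toNat, ((n : ℂ) + 2 * (h : ℂ) + (j : ℂ))) •
        (X : Polynomial ℂ) ^ (n + (-k).toNat) := by
  rw [← bm_eq n, Lop, Module.Basis.constr_basis, if_neg hk]

lemma mulX_apply (p : Polynomial ℂ) : mulX p = X * p := rfl
lemma der_apply (p : Polynomial ℂ) : der p = derivative p := rfl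

lemma lgen_decomp (h : ℝ) : lgen h 1 = mulX * der * der + ((2 * h : ℝ) : ℂ) • der := rfl

lemma lgen1_apply (h : ℝ) (n : ℕ) :
    lgen h 1 ((X:Polynomial ℂ)^n) = ((n:ℂ) * ((n:ℂ) - 1 + 2*h)) • (X:Polynomial ℂ)^(n-1) := by
  have : lgen h 1 ((X:Polynomial ℂ)^n)
      = X * derivative (derivative ((X:Polynomial ℂ)^n))
        + (((2*h:ℝ)):ℂ) • derivative ((X:Polynomial ℂ)^n) := rfl
  rw [this]
  clear this
  match n with
  | 0 => simp
  | 1 => simp [smul_eq_C_mul]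
  | (m+2) =>
    rw [derivative_X_pow, derivative_C_mul, derivative_X_pow]
    rw [smul_eq_C_mul, smul_eq_C_mul]
    push_cast
    simp only [map_mul, map_add, map_sub, map_one, map_ofNat, map_natCast]
    ring

lemma lgen0_apply (h : ℝ) (n : ℕ) :
    lgen h 0 ((X:Polynomial ℂ)^n) = ((n:ℂ) + h) • (X:Polynomial ℂ)^n := by
  have : lgen h 0 ((X:Polynomial ℂ)^n)
      = X * derivative ((X:Polynomial ℂ)^n) + (h:ℂ) • (X:Polynomial ℂ)^n := rfl
  rw [this]
  clear this
  match n with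
  | 0 => simp
  | (m+1) =>
    rw [derivative_X_pow, smul_eq_C_mul, smul_eq_C_mul]
    push_cast
    simp only [map_mul, map_add, map_sub, map_one, map_ofNat, map_natCast]
    ring

lemma lgenm1_apply (h : ℝ) (p : Polynomial ℂ) : lgen h (-1) p = X * p := rfl

lemma fac_ne (h : ℝ) (hnd : ∀ n : ℕ, 2 * h ≠ -(n : ℝ)) (n j : ℕ) :
    ((n:ℂ) + 2*(h:ℂ) + (j:ℂ)) ≠ 0 := by
  intro H
  have hre := congrArg Complex.re H
  simp [Complex.add_re] at hre
  exact hnd (n + j) (by push_cast; linarith)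

lemma Lop_zero (h : ℝ) : Lop h 0 = lgen h 0 := by
  apply (Polynomial.basisMonomials ℂ).ext
  intro n
  rw [bm_eq, Lop_apply_nonneg h 0 le_rfl, lgen0_apply]
  norm_num

lemma Lop_one (h : ℝ) : Lop h 1 = lgen h 1 := by
  apply (Polynomial.basisMonomials ℂ).ext
  intro n
  rw [bm_eq, Lop_apply_nonneg h 1 (by norm_num), lgen1_apply]
  norm_num [Nat.descFactorial]
  ring_nf

lemma Lop_negone (h : ℝ) (hnd : ∀ n : ℕ, 2 * h ≠ -(n : ℝ)) : Lop h (-1) = lgen h (-1) := by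
  apply (Polynomial.basisMonomials ℂ).ext
  intro n
  rw [bm_eq, Lop_apply_neg h (-1) (by norm_num), lgenm1_apply]
  have hne := fac_ne h hnd n 0
  simp at hne ⊢
  rw [show ((n:ℂ) + (1+1) * (h:ℂ)) = ((n:ℂ) + 2 * (h:ℂ)) by ring, div_self hne, one_smul,
    pow_succ]
  ring

lemma toNat_cast_C {n : ℤ} (hn : 0 ≤ n) : ((n.toNat : ℕ) : ℂ) = (n : ℂ) := by
  exact_mod_cast Int.toNat_of_nonneg hn

lemma Lcomm0 (h : ℝ) (n : ℤ) :
    lgen h 0 * Lop h n - Lop h n * lgen h 0 = ((0 - n : ℤ):ℂ) • Lop h (0 + n) := by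
  apply (Polynomial.basisMonomials ℂ).ext
  intro j
  rw [bm_eq]
  simp only [LinearMap.sub_apply, Module.End.mul_apply, LinearMap.smul_apply, zero_add, zero_sub]
  by_cases hn : 0 ≤ n
  · rw [Lop_apply_nonneg h n hn, map_smul, lgen0_apply, lgen0_apply, map_smul, Lop_apply_nonneg h n hn]
    rw [smul_smul, smul_smul, ← sub_smul, ← smul_assoc]
    congr 1
    by_cases hle : n.toNat ≤ j
    · have : ((j - n.toNat : ℕ) : ℂ) = (j:ℂ) - (n:ℂ) := by
        rw [Nat.cast_sub hle, toNat_cast_C hn]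
      rw [this]
      simp only [smul_eq_mul]
      push_cast
      ring
    · have : j.descFactorial n.toNat = 0 := Nat.descFactorial_eq_zero_iff_lt.mpr (by omega)
      rw [this]
      simp only [smul_eq_mul]
      push_cast
      ring
  · rw [Lop_apply_neg h n hn, map_smul, lgen0_apply, lgen0_apply, map_smul, Lop_apply_neg h n hn]
    rw [smul_smul, smul_smul, ← sub_smul, ← smul_assoc]
    congr 1
    have : (((j + (-n).toNat : ℕ)) : ℂ) = (j:ℂ) - (n:ℂ) := by
      push_cast [toNat_cast_C (show (0:ℤ) ≤ -n by omega)]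
      ring
    rw [this]
    simp only [smul_eq_mul]
    push_cast
    ring

lemma Lcomm_m1 (h : ℝ) (t : ℕ) :
    lgen h (-1) * Lop h ((t:ℤ)+1) - Lop h ((t:ℤ)+1) * lgen h (-1)
      = ((-1 - ((t:ℤ)+1) : ℤ) : ℂ) • Lop h (t:ℤ) := by
  apply (Polynomial.basisMonomials ℂ).ext
  intro m
  rw [bm_eq]
  simp only [LinearMap.sub_apply, Module.End.mul_apply, LinearMap.smul_apply]
  rw [Lop_apply_nonneg h ((t:ℤ)+1) (by positivity), lgenm1_apply, lgenm1_apply,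
    show ((X : Polynomial ℂ) * X ^ m) = X ^ (m+1) from by rw [pow_succ]; ring,
    Lop_apply_nonneg h ((t:ℤ)+1) (by positivity),
    Lop_apply_nonneg h (t:ℤ) (Int.ofNat_nonneg t)]
  rw [show ((t:ℤ)+1).toNat = t+1 from by omega, show ((t:ℤ)).toNat = t from by omega]
  rw [mul_smul_comm, show ((X:Polynomial ℂ) * X ^ (m - (t+1))) = X ^ (m - (t+1) + 1) from by
    rw [pow_succ]; ring]
  rcases lt_trichotomy m t with hc | hc | hc
  · rw [Nat.descFactorial_eq_zero_iff_lt.mpr (by omega : m < t+1),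
      Nat.descFactorial_eq_zero_iff_lt.mpr (by omega : m+1 < t+1),
      Nat.descFactorial_eq_zero_iff_lt.mpr (by omega : m < t)]
    simp
  · subst hc
    rw [Nat.descFactorial_eq_zero_iff_lt.mpr (by omega : m < m+1),
      Nat.succ_descFactorial_succ, Nat.descFactorial_self]
    rw [show m + 1 - (m+1) = 0 from by omega, show m - m = 0 from by omega]
    rw [Nat.cast_zero, mul_zero, zero_smul, zero_sub, smul_smul, ← neg_smul]
    congr 1
    push_cast
    ring
  · -- m > t, i.e. m ≥ t + 1
    have h1 : m - (t+1) + 1 = m - t := by omega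
    have h2 : m + 1 - (t+1) = m - t := by omega
    rw [h1, h2]
    rw [Nat.descFactorial_succ, Nat.succ_descFactorial_succ, smul_smul]
    rw [← sub_smul]
    congr 1
    push_cast [Nat.cast_sub (by omega : t ≤ m)]
    ring

lemma fac_ne' (h : ℝ) (hnd : ∀ n : ℕ, 2 * h ≠ -(n : ℝ)) (n : ℕ) :
    ((n:ℂ) + 2*(h:ℂ)) ≠ 0 := by
  have := fac_ne h hnd n 0
  simpa using this

lemma Lcomm_p1 (h : ℝ) (hnd : ∀ n : ℕ, 2 * h ≠ -(n : ℝ)) (k : ℕ) :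
    lgen h 1 * Lop h (-((k:ℤ)+1)) - Lop h (-((k:ℤ)+1)) * lgen h 1
      = ((1 - (-((k:ℤ)+1)) : ℤ) : ℂ) • Lop h (1 + -((k:ℤ)+1)) := by
  have hQ : ∀ (a b : ℕ), (∏ j ∈ Finset.range b, ((a:ℂ) + 2*(h:ℂ) + (j:ℂ))) ≠ 0 := fun a b =>
    Finset.prod_ne_zero_iff.mpr fun j _ => fac_ne h hnd a j
  apply (Polynomial.basisMonomials ℂ).ext
  intro m
  rw [bm_eq]
  simp only [LinearMap.sub_apply, Module.End.mul_apply, LinearMap.smul_apply]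
  rw [Lop_apply_neg h _ (by omega), map_smul, lgen1_apply, lgen1_apply, map_smul,
      Lop_apply_neg h _ (by omega)]
  rw [show (-(-((k:ℤ)+1))).toNat = k+1 from by omega]
  rw [show m + (k+1) - 1 = m + k from by omega]
  rcases k with _ | u
  · rw [show ((1:ℤ) + -(((0:ℕ):ℤ)+1)) = 0 from by norm_num, Lop_apply_nonneg h 0 le_rfl]
    simp only [Int.toNat_zero, Nat.descFactorial_zero, Nat.cast_one, mul_one, Nat.sub_zero,
      Finset.prod_range_succ, Finset.prod_range_zero, one_mul, Nat.cast_ofNat, Nat.cast_zero,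
      Nat.add_zero, add_zero]
    rcases m with _ | w
    · rw [Nat.cast_zero, zero_mul, zero_smul, sub_zero, smul_smul, smul_smul]
      congr 1
      have h1 : (h:ℂ) ≠ 0 := by
        have := fac_ne' h hnd 0
        intro hh
        simp [hh] at this
      push_cast
      field_simp
      ring
    · rw [show w+1-1 = w from rfl, show w+1+0 = w+1 from rfl, show w + (0+1) = w+1 from rfl,
        smul_smul, smul_smul, smul_smul, ← sub_smul]
      congr 1
      have h1 := fac_ne' h hnd (w+1)
      have h2 := fac_ne' h hnd w
      push_cast at h1 h2 ⊢
      rw [div_mul_eq_mul_div, mul_div_assoc', div_sub_div _ _ h1 h2, div_eq_iff (mul_ne_zero h1 h2)]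
      ring
  · rw [show ((1:ℤ) + -(((u+1:ℕ):ℤ)+1)) = -((u:ℤ)+1) from by push_cast; ring,
      Lop_apply_neg h _ (by omega), show (-(-((u:ℤ)+1))).toNat = u+1 from by omega]
    rcases m with _ | w
    · rw [Nat.cast_zero, zero_mul, zero_smul, sub_zero, smul_smul, smul_smul]
      congr 1
      have e1 : (∏ j ∈ Finset.range (u + 1 + 1), ((0:ℂ) + 2 * (h:ℂ) + (j:ℂ)))
          = (∏ j ∈ Finset.range (u + 1), ((0:ℂ) + 2 * (h:ℂ) + (j:ℂ)))
            * ((0:ℂ) + 2 * (h:ℂ) + ((u+1:ℕ):ℂ)) := by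
        rw [Finset.prod_range_succ]
      rw [e1]
      have h1 : (∏ j ∈ Finset.range (u + 1), ((0:ℂ) + 2 * (h:ℂ) + (j:ℂ))) ≠ 0 := by
        simpa using hQ 0 (u+1)
      have h2 : ((0:ℂ) + 2 * (h:ℂ) + ((u+1:ℕ):ℂ)) ≠ 0 := by
        simpa using fac_ne h hnd 0 (u+1)
      push_cast at h1 h2 ⊢
      rw [div_mul_eq_mul_div, mul_div_assoc', div_eq_div_iff (mul_ne_zero h1 h2) h1]
      ring
    · rw [show w+1-1 = w from rfl,
        show w + (u+1+1) = w+1+(u+1) from by omega,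
        smul_smul, smul_smul, smul_smul, ← sub_smul]
      congr 1
      have e1 : (∏ j ∈ Finset.range (u + 1 + 1), (((w+1:ℕ):ℂ) + 2 * (h:ℂ) + (j:ℂ)))
          = (∏ j ∈ Finset.range (u + 1), (((w+1:ℕ):ℂ) + 2 * (h:ℂ) + (j:ℂ)))
            * (((w+1:ℕ):ℂ) + 2 * (h:ℂ) + ((u+1:ℕ):ℂ)) := by
        rw [Finset.prod_range_succ]
      have e2 : (∏ j ∈ Finset.range (u + 1 + 1), ((w:ℂ) + 2 * (h:ℂ) + (j:ℂ)))
          = (∏ j ∈ Finset.range (u + 1), (((w+1:ℕ):ℂ) + 2 * (h:ℂ) + (j:ℂ)))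
            * ((w:ℂ) + 2 * (h:ℂ)) := by
        rw [Finset.prod_range_succ']
        congr 1
        · exact Finset.prod_congr rfl fun j _ => by push_cast; ring
        · push_cast; ring
      rw [e1, e2]
      have h1 : (∏ j ∈ Finset.range (u + 1), (((w+1:ℕ):ℂ) + 2 * (h:ℂ) + (j:ℂ))) ≠ 0 :=
        hQ (w+1) (u+1)
      have h2 : (((w+1:ℕ):ℂ) + 2 * (h:ℂ) + ((u+1:ℕ):ℂ)) ≠ 0 := fac_ne h hnd (w+1) (u+1)
      have h3 : ((w:ℂ) + 2 * (h:ℂ)) ≠ 0 := fac_ne' h hnd w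
      rw [div_mul_eq_mul_div, mul_div_assoc', mul_div_assoc']
      rw [div_sub_div _ _ (mul_ne_zero h1 h2) (mul_ne_zero h1 h3)]
      rw [div_eq_div_iff (mul_ne_zero (mul_ne_zero h1 h2) (mul_ne_zero h1 h3)) h1]
      push_cast
      ring

lemma coeff_Xmul_der (q : Polynomial ℂ) (i : ℕ) :
    (X * derivative q).coeff i = (i:ℂ) * q.coeff i := by
  cases i with
  | zero => simp
  | succ j =>
    rw [coeff_X_mul, coeff_derivative]
    push_cast
    ring

lemma coeff_lgen1 (h : ℝ) (q : Polynomial ℂ) (i : ℕ) :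
    ((lgen h 1) q).coeff i = ((i:ℂ)+1) * ((i:ℂ) + 2*h) * q.coeff (i+1) := by
  have hd : (lgen h 1) q = X * derivative (derivative q) + ((2*h:ℝ):ℂ) • derivative q := rfl
  rw [hd, coeff_add, coeff_Xmul_der, coeff_smul, coeff_derivative]
  push_cast
  simp only [smul_eq_mul]
  ring

lemma Uup (h : ℝ) (n : ℤ) (hn : 1 ≤ n) (D : Module.End ℂ (Polynomial ℂ))
    (hc : mulX * D = D * mulX)
    (hw : lgen h 0 * D - D * lgen h 0 = ((-n : ℤ):ℂ) • D) : D = 0 := by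
  have hD1 : D 1 = 0 := by
    have happ := congrArg (fun T : Module.End ℂ (Polynomial ℂ) => T 1) hw
    simp only [LinearMap.sub_apply, Module.End.mul_apply, LinearMap.smul_apply] at happ
    have hl0 : (lgen h 0) (1 : Polynomial ℂ) = (h:ℂ) • 1 := by
      have : (lgen h 0) (1 : Polynomial ℂ) = X * derivative (1:Polynomial ℂ) + (h:ℂ) • 1 := rfl
      simp [this]
    rw [hl0, map_smul] at happ
    have hl0D : (lgen h 0) (D 1) = X * derivative (D 1) + (h:ℂ) • (D 1) := rfl
    rw [hl0D] at happ
    have hq : X * derivative (D 1) = ((-n : ℤ):ℂ) • (D 1) := by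
      have := happ
      abel_nf at this ⊢
      linear_combination (norm := abel_nf) this
    ext i
    have hco := congrArg (fun p : Polynomial ℂ => p.coeff i) hq
    simp only [coeff_smul, smul_eq_mul] at hco
    rw [coeff_Xmul_der] at hco
    have hfac : ((i:ℂ) - ((-n:ℤ):ℂ)) * (D 1).coeff i = 0 := by
      rw [sub_mul, hco]; ring
    rcases mul_eq_zero.mp hfac with hz | hz
    · exfalso
      apply sub_ne_zero.mpr _ hz
      intro hcontra
      have : ((i:ℤ):ℂ) = ((-n:ℤ):ℂ) := by push_cast at hcontra ⊢; exact hcontra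
      have := Int.cast_injective (α := ℂ) this
      omega
    · simpa using hz
  have hpow : ∀ j : ℕ, D ((X:Polynomial ℂ)^j) = 0 := by
    intro j
    induction j with
    | zero => simpa using hD1
    | succ t ih =>
      rw [pow_succ, mul_comm, ← mulX_apply, ← Module.End.mul_apply, ← hc]
      simp only [Module.End.mul_apply, ih, map_zero]
  apply (Polynomial.basisMonomials ℂ).ext
  intro m
  rw [bm_eq]
  simp [hpow m]

lemma Udown (h : ℝ) (hnd : ∀ n : ℕ, 2 * h ≠ -(n : ℝ)) (n : ℤ) (hn : n ≤ -1)
    (D : Module.End ℂ (Polynomial ℂ))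
    (hc : lgen h 1 * D = D * lgen h 1)
    (hw : lgen h 0 * D - D * lgen h 0 = ((-n : ℤ):ℂ) • D) : D = 0 := by
  have hpow : ∀ j : ℕ, D ((X:Polynomial ℂ)^j) = 0 := by
    intro j
    induction j using Nat.strong_induction_on with
    | _ j ih =>
      -- weight equation
      have happ := congrArg
        (fun T : Module.End ℂ (Polynomial ℂ) => T ((X:Polynomial ℂ)^j)) hw
      simp only [LinearMap.sub_apply, Module.End.mul_apply, LinearMap.smul_apply] at happ
      rw [lgen0_apply, map_smul] at happ
      have hl0D : (lgen h 0) (D (X^j : Polynomial ℂ))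
          = X * derivative (D (X^j : Polynomial ℂ)) + (h:ℂ) • (D (X^j : Polynomial ℂ)) := rfl
      rw [hl0D] at happ
      have hq : X * derivative (D ((X:Polynomial ℂ)^j))
          = (((j:ℂ)) + ((-n:ℤ):ℂ)) • (D ((X:Polynomial ℂ)^j)) := by
        linear_combination (norm := module) happ
      -- l1 kills D (X^j)
      have hl1 : (lgen h 1) (D ((X:Polynomial ℂ)^j)) = 0 := by
        have := congrArg
          (fun T : Module.End ℂ (Polynomial ℂ) => T ((X:Polynomial ℂ)^j)) hc
        simp only [Module.End.mul_apply] at this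
        rw [this, lgen1_apply, map_smul]
        rcases Nat.eq_zero_or_pos j with hj | hj
        · subst hj; simp
        · rw [ih (j-1) (by omega), smul_zero]
      -- now show all coefficients vanish
      ext i
      simp only [coeff_zero]
      by_cases hij : (i : ℤ) = (j : ℤ) - n
      · -- top coefficient: use hl1 at index i - 1
        have hipos : 1 ≤ i := by omega
        have hco := congrArg (fun p : Polynomial ℂ => p.coeff (i-1)) hl1
        simp only [coeff_zero] at hco
        rw [coeff_lgen1, show i - 1 + 1 = i from by omega] at hco
        have f1 : (((i-1:ℕ):ℂ)+1) ≠ 0 := by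
          intro hz
          have : (((i-1:ℕ):ℤ) + 1 : ℤ) = 0 := by exact_mod_cast (by push_cast at hz ⊢; exact_mod_cast hz)
          omega
        have f2 : (((i-1:ℕ):ℂ) + 2*h) ≠ 0 := fac_ne' h hnd (i-1)
        have := mul_eq_zero.mp hco
        rcases this with hz | hz
        · exact absurd (mul_eq_zero.mp hz) (by push_neg; exact ⟨f1, f2⟩)
        · exact hz
      · -- off-weight coefficient vanishes by hq
        have hco := congrArg (fun p : Polynomial ℂ => p.coeff i) hq
        simp only [coeff_smul, smul_eq_mul] at hco
        rw [coeff_Xmul_der] at hco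
        have hfac : ((i:ℂ) - ((j:ℂ) + ((-n:ℤ):ℂ))) * (D ((X:Polynomial ℂ)^j)).coeff i = 0 := by
          rw [sub_mul, hco]; ring
        rcases mul_eq_zero.mp hfac with hz | hz
        · exfalso
          apply hij
          have hcontra := sub_eq_zero.mp hz
          exact_mod_cast hcontra
        · exact hz
  apply (Polynomial.basisMonomials ℂ).ext
  intro m
  rw [bm_eq]
  simp [hpow m]

/-- Uniqueness of the `q_R`-conformal symmetries: any family `L'` of
operators with `[l_i, L'_n] = (i−n)·L'_{i+n}` and `L'_{−1} = l_{−1}`, `L'_0 = l_0`,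
`L'_1 = l_1` coincides with `L`. -/
theorem stmt9 (h : ℝ) (hnd : ∀ n : ℕ, 2 * h ≠ -(n : ℝ))
    (L' : ℤ → Module.End ℂ (Polynomial ℂ))
    (hcomm : ∀ i ∈ ({-1, 0, 1} : Set ℤ), ∀ n : ℤ,
      lgen h i * L' n - L' n * lgen h i = ((i - n : ℤ) : ℂ) • L' (i + n))
    (hm1 : L' (-1) = lgen h (-1)) (h0 : L' 0 = lgen h 0) (h1 : L' 1 = lgen h 1) :
    ∀ n : ℤ, L' n = Lop h n := by
  have hmem1 : (-1 : ℤ) ∈ ({-1, 0, 1} : Set ℤ) := by simp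
  have hmem2 : (0 : ℤ) ∈ ({-1, 0, 1} : Set ℤ) := by simp
  have hmem3 : (1 : ℤ) ∈ ({-1, 0, 1} : Set ℤ) := by simp
  have key : ∀ k : ℕ, L' (k:ℤ) = Lop h (k:ℤ) ∧ L' (-(k:ℤ)) = Lop h (-(k:ℤ)) := by
    intro k
    induction k with
    | zero =>
      refine ⟨?_, ?_⟩ <;>
        · rw [show (((0:ℕ):ℤ)) = 0 from by norm_num] <;> try rw [neg_zero]
          rw [h0, Lop_zero]
    | succ t ih =>
      constructor
      · -- upward
        rw [show (((t+1:ℕ)):ℤ) = (t:ℤ)+1 from by push_cast; ring]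
        have e1 := hcomm (-1) hmem1 ((t:ℤ)+1)
        rw [show (-1 + ((t:ℤ)+1)) = (t:ℤ) from by ring, ih.1] at e1
        have e2 := Lcomm_m1 h t
        set D := L' ((t:ℤ)+1) - Lop h ((t:ℤ)+1) with hD
        have hDzero : D = 0 := by
          apply Uup h ((t:ℤ)+1) (by omega)
          · show mulX * D = D * mulX
            rw [show mulX = lgen h (-1) from rfl, hD, mul_sub, sub_mul]
            linear_combination (norm := module) e1 - e2
          · have e4 := hcomm 0 hmem2 ((t:ℤ)+1)
            rw [zero_add, show ((0:ℤ) - ((t:ℤ)+1)) = -((t:ℤ)+1) from by ring] at e4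
            have e5 := Lcomm0 h ((t:ℤ)+1)
            rw [zero_add, show ((0:ℤ) - ((t:ℤ)+1)) = -((t:ℤ)+1) from by ring] at e5
            rw [hD, mul_sub, sub_mul, smul_sub]
            linear_combination (norm := module) e4 - e5
        have := sub_eq_zero.mp (hD ▸ hDzero)
        exact this
      · -- downward
        rw [show (-(((t+1:ℕ)):ℤ)) = -((t:ℤ)+1) from by push_cast; ring]
        have e1 := hcomm 1 hmem3 (-((t:ℤ)+1))
        rw [show ((1:ℤ) + -((t:ℤ)+1)) = -(t:ℤ) from by ring, ih.2] at e1
        have e2 := Lcomm_p1 h hnd t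
        rw [show ((1:ℤ) + -((t:ℤ)+1)) = -(t:ℤ) from by ring] at e2
        set D := L' (-((t:ℤ)+1)) - Lop h (-((t:ℤ)+1)) with hD
        have hDzero : D = 0 := by
          apply Udown h hnd (-((t:ℤ)+1)) (by omega)
          · show lgen h 1 * D = D * lgen h 1
            rw [hD, mul_sub, sub_mul]
            linear_combination (norm := module) e1 - e2
          · have e4 := hcomm 0 hmem2 (-((t:ℤ)+1))
            rw [zero_add, show ((0:ℤ) - -((t:ℤ)+1)) = -(-((t:ℤ)+1)) from by ring] at e4
            have e5 := Lcomm0 h (-((t:ℤ)+1))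
            rw [zero_add, show ((0:ℤ) - -((t:ℤ)+1)) = -(-((t:ℤ)+1)) from by ring] at e5
            rw [hD, mul_sub, sub_mul, smul_sub]
            linear_combination (norm := module) e4 - e5
        have := sub_eq_zero.mp (hD ▸ hDzero)
        exact this
  intro n
  rcases le_or_gt 0 n with hn | hn
  · obtain ⟨k, rfl⟩ : ∃ k:ℕ, n = (k:ℤ) := ⟨n.toNat, by omega⟩
    exact (key k).1
  · obtain ⟨k, rfl⟩ : ∃ k:ℕ, n = -(k:ℤ) := ⟨(-n).toNat, by omega⟩
    exact (key k).2
end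
end
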